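/- arXiv:2504.06590 — 6 statements merged into one kernel-verified Lean document; each statement's English description precedes it below -/
import Mathlib

section
/- Let V be a bicomplex (a bigraded vector space over a field of characteristic zero with anticommuting differentials ∂ of bidegree (1,0) and ∂̄ of bidegree (0,1)). If there exist degree −1 linear maps s, s̄ : V → V satisfying ∂s + s∂ = id, ∂s̄ + s̄∂ = 0, ∂̄s̄ + s̄∂̄ = id, and ∂̄s + s∂̄ = 0, then the Bott–Chern cohomology H_BC(V) = (ker ∂ ∩ ker ∂̄)/im(∂∂̄) vanishes. -/
open LinearMap Submodule

/-- A bicomplex (bigraded vector space over a field of characteristic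
zero with anticommuting differentials `d1 = ∂` of bidegree (1,0) and `d2 = ∂̄` of bidegree
(0,1)) admitting a pair of contracting homotopies `s, sb` (degree `-1` maps with
`∂s + s∂ = id`, `∂s̄ + s̄∂ = 0`, `∂̄s̄ + s̄∂̄ = id`, `∂̄s + s∂̄ = 0`) has vanishing
Bott–Chern cohomology `H_BC = (ker ∂ ∩ ker ∂̄)/im(∂∂̄)`. -/
theorem statement0
    {K : Type*} [Field K] [CharZero K]
    {M : Type*} [AddCommGroup M] [Module K M]
    (g : ℤ → ℤ → Submodule K M)
    (hg : DirectSum.IsInternal fun pq : ℤ × ℤ => g pq.1 pq.2)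
    (d1 d2 s sb : M →ₗ[K] M)
    (hd1g : ∀ p q, (g p q).map d1 ≤ g (p + 1) q)
    (hd2g : ∀ p q, (g p q).map d2 ≤ g p (q + 1))
    (hsg : ∀ p q, (g p q).map s ≤ g (p - 1) q)
    (hsbg : ∀ p q, (g p q).map sb ≤ g p (q - 1))
    (hd1sq : d1 ∘ₗ d1 = 0) (hd2sq : d2 ∘ₗ d2 = 0)
    (hanti : d1 ∘ₗ d2 + d2 ∘ₗ d1 = 0)
    (h1 : d1 ∘ₗ s + s ∘ₗ d1 = LinearMap.id)
    (h2 : d1 ∘ₗ sb + sb ∘ₗ d1 = 0)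
    (h3 : d2 ∘ₗ sb + sb ∘ₗ d2 = LinearMap.id)
    (h4 : d2 ∘ₗ s + s ∘ₗ d2 = 0) :
    ker d1 ⊓ ker d2 ≤ range (d1 ∘ₗ d2) := by
  rintro x ⟨hx1, hx2⟩
  have hx1 : d1 x = 0 := hx1
  have hx2 : d2 x = 0 := hx2
  have e4 : d2 (s (sb x)) + s (d2 (sb x)) = 0 :=
    by simpa using congrArg (fun f : M →ₗ[K] M => f (sb x)) h4
  have e3 : d2 (sb x) + sb (d2 x) = x :=
    by simpa using congrArg (fun f : M →ₗ[K] M => f x) h3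
  have e1 : d1 (s x) + s (d1 x) = x :=
    by simpa using congrArg (fun f : M →ₗ[K] M => f x) h1
  have hd2sb : d2 (sb x) = x := by simpa [hx2] using e3
  have hd1s : d1 (s x) = x := by simpa [hx1] using e1
  refine ⟨-(s (sb x)), ?_⟩
  have hd2s : d2 (s (sb x)) = -(s x) := by
    rw [hd2sb] at e4
    have : d2 (s (sb x)) + s x = 0 := e4
    rw [eq_neg_iff_add_eq_zero]; exact this
  simp only [LinearMap.comp_apply, map_neg, hd2s, neg_neg, hd1s]
end

section
/- A bicomplex V is (k)-connected in the sense that H_A^i(V) = 0 for all i ≤ k if and only if H^i(V) := H_A^i(V) ⊕ H_{B̃C}^{i+1}(V) vanishes for all i ≤ k. Concretely: H_A^{≤k}(V) = 0 implies H_{B̃C}^{≤k+1}(V) = 0. -/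
open LinearMap Submodule

/-- A bicomplex `V` is `k`-connected in the sense that the Aeppli
cohomology `H_A^i(V) = (ker ∂∂̄ ∩ V^i)/(im ∂ + im ∂̄)` vanishes for all `i ≤ k` iff
`H^i(V) = H_A^i(V) ⊕ H_{B̃C}^{i+1}(V)` vanishes for all `i ≤ k`; concretely,
`H_A^{≤k}(V) = 0` implies vanishing of the reduced Bott–Chern cohomology
`H_{B̃C}^i = (ker ∂ ∩ ker ∂̄ ∩ (im ∂ + im ∂̄) ∩ V^i)/im(∂∂̄)` for all `i ≤ k+1`. -/
theorem statement5
    {K : Type*} [Field K] [CharZero K]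
    {M : Type*} [AddCommGroup M] [Module K M]
    (g : ℤ → Submodule K M)
    (hg : DirectSum.IsInternal g)
    (d1 d2 : M →ₗ[K] M)
    (hd1g : ∀ i, (g i).map d1 ≤ g (i + 1))
    (hd2g : ∀ i, (g i).map d2 ≤ g (i + 1))
    (hd1sq : d1 ∘ₗ d1 = 0) (hd2sq : d2 ∘ₗ d2 = 0)
    (hanti : d1 ∘ₗ d2 + d2 ∘ₗ d1 = 0)
    (k : ℤ) :
    (∀ i ≤ k, ker (d1 ∘ₗ d2) ⊓ g i ≤ range d1 ⊔ range d2) ↔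
      ((∀ i ≤ k, ker (d1 ∘ₗ d2) ⊓ g i ≤ range d1 ⊔ range d2) ∧
        (∀ i ≤ k + 1, ker d1 ⊓ ker d2 ⊓ (range d1 ⊔ range d2) ⊓ g i ≤
          range (d1 ∘ₗ d2))) := by
  refine ⟨fun hA => ⟨hA, ?_⟩, fun h => h.1⟩
  haveI : DirectSum.Decomposition g := hg.chooseDecomposition
  -- the projection onto the degree-`n` component
  set π : ℤ → M → M := fun n y => (DirectSum.decompose g y n : M) with hπ
  have πadd : ∀ n y z, π n (y + z) = π n y + π n z := by
    intro n y z
    simp [hπ]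
  have πzero : ∀ n, π n 0 = 0 := by intro n; simp [hπ]
  -- graded maps commute with the projections
  have key : ∀ (d : M →ₗ[K] M), (∀ j, (g j).map d ≤ g (j + 1)) →
      ∀ (n : ℤ) (y : M), π (n + 1) (d y) = d (π n y) := by
    intro d hd n y
    induction y using DirectSum.Decomposition.inductionOn g with
    | zero => simp [πzero]
    | homogeneous x =>
      rename_i j
      by_cases hjn : j = n
      · subst hjn
        have hdx : d x ∈ g (j + 1) := hd j ⟨x, x.2, rfl⟩
        rw [hπ]
        simp only
        rw [DirectSum.decompose_of_mem_same g hdx,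
          DirectSum.decompose_of_mem_same g x.2]
      · have hdx : d x ∈ g (j + 1) := hd j ⟨x, x.2, rfl⟩
        rw [hπ]
        simp only
        rw [DirectSum.decompose_of_mem_ne g hdx (by omega),
          DirectSum.decompose_of_mem_ne g x.2 hjn, map_zero]
    | add y z hy hz =>
      rw [map_add, πadd, πadd, hy, hz, map_add]
  intro i hi x hx
  obtain ⟨⟨⟨hx1', hx2'⟩, hx3⟩, hxi⟩ := hx
  have hx1 : d1 x = 0 := hx1'
  have hx2 : d2 x = 0 := hx2'
  obtain ⟨y, hy, z, hz, rfl⟩ := mem_sup.mp hx3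
  obtain ⟨a, rfl⟩ := mem_range.mp hy
  obtain ⟨b, rfl⟩ := mem_range.mp hz
  set a' : M := π (i - 1) a with ha'
  set b' : M := π (i - 1) b with hb'
  have hi1 : i - 1 + 1 = i := by ring
  -- the homogeneous replacements still sum to x
  have hsum : d1 a' + d2 b' = d1 a + d2 b := by
    rw [ha', hb', ← key d1 hd1g, ← key d2 hd2g, ← πadd, hi1]
    exact DirectSum.decompose_of_mem_same g hxi
  have hd1d1 : ∀ m : M, d1 (d1 m) = 0 := fun m => by
    simpa using LinearMap.congr_fun hd1sq m
  have hd2d2 : ∀ m : M, d2 (d2 m) = 0 := fun m => by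
    simpa using LinearMap.congr_fun hd2sq m
  have hanti' : ∀ m : M, d1 (d2 m) + d2 (d1 m) = 0 := fun m => by
    simpa using LinearMap.congr_fun hanti m
  -- d1 d2 b = 0 and d2 d1 a = 0
  have hb0 : d1 (d2 b) = 0 := by
    have := hx1
    rw [map_add, hd1d1] at this
    simpa using this
  have ha0 : d1 (d2 a) = 0 := by
    have h2 : d2 (d1 a) = 0 := by
      have := hx2
      rw [map_add, hd2d2] at this
      simpa using this
    have := hanti' a
    rw [h2, add_zero] at this
    exact this
  -- hence a' and b' are in the kernel of d1 ∘ d2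
  have ha'k : d1 (d2 a') = 0 := by
    rw [ha', ← key d2 hd2g, ← key d1 hd1g, ha0, πzero]
  have hb'k : d1 (d2 b') = 0 := by
    rw [hb', ← key d2 hd2g, ← key d1 hd1g, hb0, πzero]
  have ha'g : a' ∈ g (i - 1) := SetLike.coe_mem _
  have hb'g : b' ∈ g (i - 1) := SetLike.coe_mem _
  -- apply Aeppli vanishing in degree i - 1 ≤ k
  have ha'' : a' ∈ range d1 ⊔ range d2 :=
    hA (i - 1) (by omega) ⟨mem_ker.mpr (by simpa using ha'k), ha'g⟩
  have hb'' : b' ∈ range d1 ⊔ range d2 :=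
    hA (i - 1) (by omega) ⟨mem_ker.mpr (by simpa using hb'k), hb'g⟩
  obtain ⟨s, hs, t, ht, hast⟩ := mem_sup.mp ha''
  obtain ⟨s', rfl⟩ := mem_range.mp hs
  obtain ⟨t', rfl⟩ := mem_range.mp ht
  obtain ⟨u, hu, v, hv, hbuv⟩ := mem_sup.mp hb''
  obtain ⟨u', rfl⟩ := mem_range.mp hu
  obtain ⟨v', rfl⟩ := mem_range.mp hv
  refine mem_range.mpr ⟨t' - u', ?_⟩
  have h1 : d1 a' = d1 (d2 t') := by
    rw [← hast, map_add, hd1d1, zero_add]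
  have h2 : d2 b' = -(d1 (d2 u')) := by
    rw [← hbuv, map_add, hd2d2, add_zero]
    exact eq_neg_of_add_eq_zero_right (hanti' u')
  calc (d1 ∘ₗ d2) (t' - u') = d1 (d2 t') - d1 (d2 u') := by
        simp [comp_apply, map_sub]
    _ = d1 a' + d2 b' := by rw [h1, h2, ← sub_eq_add_neg]
    _ = d1 a + d2 b := hsum
end

section
/- Let V be a bicomplex and τ_{≥k}V the truncation given by (τ_{≥k}V)^i = 0 for i ≤ k−1, = V^k/(im ∂ + im ∂̄)^k for i = k, = V^{k+1}/(im ∂∂̄)^{k+1} for i = k+1, and = V^i for i ≥ k+2. Then the natural projection V → τ_{≥k}V induces an isomorphism on Aeppli cohomology H_A^i for all i ≥ k. -/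
open LinearMap Submodule DirectSum

section Aux
variable {K : Type*} [Field K] {M : Type*} [AddCommGroup M] [Module K M]
  (g : ℤ → Submodule K M) (hg : DirectSum.IsInternal g)

/-- Projection onto the graded pieces of degree `< c`. -/
noncomputable def lowProj (c : ℤ) : M →ₗ[K] M :=
  (DirectSum.toModule K ℤ M (fun j => if j < c then (g j).subtype else 0)) ∘ₗ
    ((LinearEquiv.ofBijective (DirectSum.coeLinearMap g) hg).symm : M →ₗ[K] ⨁ i, g i)

theorem lowProj_of_mem {c j : ℤ} {x : M} (hx : x ∈ g j) :
    lowProj g hg c x = if j < c then x else 0 := by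
  have h1 : (LinearEquiv.ofBijective (DirectSum.coeLinearMap g) hg).symm x
      = DirectSum.of (fun i => (g i : Submodule K M)) j ⟨x, hx⟩ := by
    apply (LinearEquiv.ofBijective (DirectSum.coeLinearMap g) hg).injective
    simp [DirectSum.coeLinearMap_of]
    exact (DirectSum.coeLinearMap_of (A := g) j ⟨x, hx⟩).symm
  rw [lowProj, LinearMap.comp_apply, LinearEquiv.coe_coe, h1]
  rw [show DirectSum.of (fun i => (g i : Submodule K M)) j ⟨x, hx⟩
      = DirectSum.lof K ℤ (fun i => (g i : Submodule K M)) j ⟨x, hx⟩ from rfl]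
  rw [DirectSum.toModule_lof]
  split <;> simp

theorem lowProj_eq_self {c : ℤ} {x : M} (hx : x ∈ ⨆ j : ℤ, ⨆ _ : j < c, g j) :
    lowProj g hg c x = x := by
  have hle : (⨆ j : ℤ, ⨆ _ : j < c, g j) ≤ LinearMap.eqLocus (lowProj g hg c) LinearMap.id := by
    refine iSup_le fun j => iSup_le fun hj => fun y hy => ?_
    have := lowProj_of_mem g hg (c := c) hy
    rw [if_pos hj] at this
    exact LinearMap.mem_eqLocus.mpr this
  exact hle hx

theorem lowProj_comm {c : ℤ} {d : M →ₗ[K] M} (hd : ∀ j, (g j).map d ≤ g (j + 1)) :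
    lowProj g hg c ∘ₗ d = d ∘ₗ lowProj g hg (c - 1) := by
  have htop : (⊤ : Submodule K M) ≤
      LinearMap.eqLocus (lowProj g hg c ∘ₗ d) (d ∘ₗ lowProj g hg (c - 1)) := by
    rw [← hg.submodule_iSup_eq_top]
    refine iSup_le fun j => fun x hx => ?_
    have hdx : d x ∈ g (j + 1) := hd j ⟨x, hx, rfl⟩
    have h1 : lowProj g hg c (d x) = if j + 1 < c then d x else 0 := lowProj_of_mem g hg hdx
    have h2 : lowProj g hg (c - 1) x = if j < c - 1 then x else 0 := lowProj_of_mem g hg hx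
    refine LinearMap.mem_eqLocus.mpr ?_
    simp only [LinearMap.comp_apply]
    rw [h1, h2]
    by_cases hc : j + 1 < c
    · rw [if_pos hc, if_pos (by omega)]
    · rw [if_neg hc, if_neg (by omega), map_zero]
  ext x
  exact htop (Submodule.mem_top (x := x))

include hg in
theorem key_lemma {k i : ℤ} (hik : k ≤ i) {d1 d2 : M →ₗ[K] M}
    (hd1g : ∀ j, (g j).map d1 ≤ g (j + 1)) (hd2g : ∀ j, (g j).map d2 ≤ g (j + 1))
    {v : M} (hv : v ∈ g i)
    (hmem : v ∈ (⨆ j : ℤ, ⨆ _ : j < k, g j) ⊔ (range d1 ⊔ range d2)) :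
    v ∈ range d1 ⊔ range d2 := by
  obtain ⟨w, hw, r, hr, hsum⟩ := Submodule.mem_sup.mp hmem
  obtain ⟨x, ⟨a, rfl⟩, y, ⟨b, rfl⟩, rfl⟩ := Submodule.mem_sup.mp hr
  set p := lowProj g hg k with hp
  set q := lowProj g hg (k - 1) with hq
  have hpv : p v = 0 := by
    rw [hp, lowProj_of_mem g hg hv, if_neg (by omega)]
  have hpw : p w = w := lowProj_eq_self g hg hw
  have hc1 : p (d1 a) = d1 (q a) := LinearMap.congr_fun (lowProj_comm g hg hd1g) a
  have hc2 : p (d2 b) = d2 (q b) := LinearMap.congr_fun (lowProj_comm g hg hd2g) b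
  have h0 : w + (d1 (q a) + d2 (q b)) = 0 := by
    rw [← hpw, ← hc1, ← hc2, ← map_add, ← map_add, hsum, hpv]
  have hw' : w = -(d1 (q a) + d2 (q b)) := by
    rwa [add_eq_zero_iff_eq_neg] at h0
  refine Submodule.mem_sup.mpr ⟨d1 (a - q a), ⟨a - q a, rfl⟩, d2 (b - q b), ⟨b - q b, rfl⟩, ?_⟩
  rw [map_sub, map_sub, ← hsum, hw']
  abel

end Aux

/-- For a bicomplex `V`, the truncation `τ_{≥k}V` is the quotient
of `V` by the subcomplex `S = (⊕_{i<k} V^i) ⊕ (im ∂ + im ∂̄)^k ⊕ (im ∂∂̄)^{k+1}`,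
so `(τ_{≥k}V)^i = 0` for `i < k`, `V^k/(im∂+im∂̄)^k` for `i = k`,
`V^{k+1}/(im ∂∂̄)^{k+1}` for `i = k+1` and `V^i` above.  The projection
`V → τ_{≥k}V` induces an isomorphism on Aeppli cohomology `H_A^i` for all `i ≥ k`
(stated as bijectivity on Aeppli classes: surjectivity and injectivity). -/
theorem statement6
    {K : Type*} [Field K] [CharZero K]
    {M : Type*} [AddCommGroup M] [Module K M]
    (g : ℤ → Submodule K M)
    (hg : DirectSum.IsInternal g)
    (d1 d2 : M →ₗ[K] M)
    (hd1g : ∀ i, (g i).map d1 ≤ g (i + 1))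
    (hd2g : ∀ i, (g i).map d2 ≤ g (i + 1))
    (hd1sq : d1 ∘ₗ d1 = 0) (hd2sq : d2 ∘ₗ d2 = 0)
    (hanti : d1 ∘ₗ d2 + d2 ∘ₗ d1 = 0)
    (k : ℤ) (S : Submodule K M)
    (hS : S = (⨆ i : ℤ, ⨆ _ : i < k, g i)
        ⊔ ((range d1 ⊔ range d2) ⊓ g k)
        ⊔ (range (d1 ∘ₗ d2) ⊓ g (k + 1)))
    (DT1 DT2 : (M ⧸ S) →ₗ[K] (M ⧸ S))
    (hDT1 : DT1 ∘ₗ S.mkQ = S.mkQ ∘ₗ d1)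
    (hDT2 : DT2 ∘ₗ S.mkQ = S.mkQ ∘ₗ d2)
    (gT : ℤ → Submodule K (M ⧸ S))
    (hgT : ∀ i, gT i = (g i).map S.mkQ) :
    ∀ i : ℤ, k ≤ i →
      (∀ t ∈ gT i, DT1 (DT2 t) = 0 →
        ∃ v ∈ g i, d1 (d2 v) = 0 ∧ S.mkQ v - t ∈ range DT1 ⊔ range DT2) ∧
      (∀ v ∈ g i, d1 (d2 v) = 0 → S.mkQ v ∈ range DT1 ⊔ range DT2 →
        v ∈ range d1 ⊔ range d2) := by
  intro i hik
  -- S is contained in the "low" part together with ranges of d1, d2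
  have hSle : S ≤ (⨆ j : ℤ, ⨆ _ : j < k, g j) ⊔ (range d1 ⊔ range d2) := by
    rw [hS]
    refine sup_le (sup_le le_sup_left ?_) ?_
    · exact le_trans inf_le_left le_sup_right
    · refine le_trans inf_le_left (le_trans ?_ le_sup_right)
      exact le_trans (LinearMap.range_comp_le_range d2 d1) le_sup_left
  -- S is contained in degrees < k + 2
  have hSle2 : S ≤ ⨆ j ∈ {j : ℤ | j < k + 2}, g j := by
    rw [hS]
    refine sup_le (sup_le ?_ ?_) ?_
    · exact iSup_le fun j => iSup_le fun hj =>
        le_iSup_of_le j (le_iSup_of_le (show j ∈ {j : ℤ | j < k + 2} from by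
          simp only [Set.mem_setOf_eq]; omega) le_rfl)
    · exact le_trans inf_le_right
        (le_iSup_of_le k (le_iSup_of_le (show k ∈ {j : ℤ | j < k + 2} from by
          simp only [Set.mem_setOf_eq]; omega) le_rfl))
    · exact le_trans inf_le_right
        (le_iSup_of_le (k + 1) (le_iSup_of_le (show k + 1 ∈ {j : ℤ | j < k + 2} from by
          simp only [Set.mem_setOf_eq]; omega) le_rfl))
  constructor
  · -- surjectivity
    intro t ht hdt
    rw [hgT] at ht
    obtain ⟨u, hu, rfl⟩ := ht
    have h2 : d2 u ∈ g (i + 1) := hd2g i ⟨u, hu, rfl⟩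
    have h12 : d1 (d2 u) ∈ g (i + 2) := by
      have := hd1g (i + 1) ⟨d2 u, h2, rfl⟩
      rwa [show (i + 1 + 1 : ℤ) = i + 2 by ring] at this
    have hmkq : S.mkQ (d1 (d2 u)) = 0 := by
      have e2 : DT2 (S.mkQ u) = S.mkQ (d2 u) := LinearMap.congr_fun hDT2 u
      have e1 : DT1 (S.mkQ (d2 u)) = S.mkQ (d1 (d2 u)) := LinearMap.congr_fun hDT1 (d2 u)
      rw [← e1, ← e2]
      exact hdt
    have hmemS : d1 (d2 u) ∈ S := by
      rwa [Submodule.mkQ_apply, Submodule.Quotient.mk_eq_zero] at hmkq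
    have hzero : d1 (d2 u) = 0 := by
      have hdisj : Disjoint (g (i + 2)) (⨆ j ∈ {j : ℤ | j < k + 2}, g j) :=
        hg.submodule_iSupIndep.disjoint_biSup
          (show (i + 2) ∉ {j : ℤ | j < k + 2} from by
            simp only [Set.mem_setOf_eq]; omega)
      exact (Submodule.disjoint_def.mp hdisj) _ h12 (hSle2 hmemS)
    exact ⟨u, hu, hzero, by rw [sub_self]; exact zero_mem _⟩
  · -- injectivity
    intro v hv _ hvmem
    obtain ⟨x, ⟨t1, hx⟩, y, ⟨t2, hy⟩, hxy⟩ := Submodule.mem_sup.mp hvmem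
    obtain ⟨a, rfl⟩ := S.mkQ_surjective t1
    obtain ⟨b, rfl⟩ := S.mkQ_surjective t2
    rw [← hx, ← hy] at hxy
    have hx' : DT1 (S.mkQ a) = S.mkQ (d1 a) := LinearMap.congr_fun hDT1 a
    have hy' : DT2 (S.mkQ b) = S.mkQ (d2 b) := LinearMap.congr_fun hDT2 b
    rw [hx', hy'] at hxy
    have hsub : v - (d1 a + d2 b) ∈ S := by
      have h0 : S.mkQ (v - (d1 a + d2 b)) = 0 := by
        rw [map_sub, map_add, hxy, sub_self]
      rwa [Submodule.mkQ_apply, Submodule.Quotient.mk_eq_zero] at h0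
    have hvin : v ∈ (⨆ j : ℤ, ⨆ _ : j < k, g j) ⊔ (range d1 ⊔ range d2) := by
      have h1 := hSle hsub
      have h2 : d1 a + d2 b ∈ (⨆ j : ℤ, ⨆ _ : j < k, g j) ⊔ (range d1 ⊔ range d2) :=
        le_sup_right (α := Submodule K M)
          (Submodule.mem_sup.mpr ⟨d1 a, ⟨a, rfl⟩, d2 b, ⟨b, rfl⟩, rfl⟩)
      have := add_mem h1 h2
      rwa [sub_add_cancel] at this
    exact key_lemma g hg hik hd1g hd2g hv hvin
end

section
/- Let f : V → W be an injective morphism of bicomplexes with cokernel Q. Then there are long exact sequences relating Aeppli and Bott–Chern cohomology; in particular there is an exact sequence ⋯ → H_A^i(V) → H_A^i(W) → H_A^i(Q) → H_BC^{i+2}(V) → H_BC^{i+2}(W) → ⋯, where the connecting map H_A^i(Q) → H_BC^{i+2}(V) sends the class of q ∈ ker(∂∂̄) to the class of ∂∂̄(w) for any lift w ∈ W of q. -/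
open LinearMap Submodule

/-- For an injective morphism `f : V → W` of bicomplexes with
cokernel `Q` there is a long exact sequence
`⋯ → H_A^i(V) → H_A^i(W) → H_A^i(Q) → H_BC^{i+2}(V) → H_BC^{i+2}(W) → ⋯`.
Elements of `H_A(Q)` are represented by `w ∈ W` with `∂∂̄w ∈ range f`, and the
connecting map sends such a class to the class of `f⁻¹(∂∂̄ w)` in `H_BC(V)`.
The conclusion records: (a) well-definedness (the preimage lies in
`ker ∂ ∩ ker ∂̄`); (b) independence of the representative; (c) exactness at
`H_A(Q)`; (d) exactness at `H_BC(V)`. -/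
theorem statement9
    {K : Type*} [Field K] [CharZero K]
    {V W : Type*} [AddCommGroup V] [Module K V] [AddCommGroup W] [Module K W]
    (dV1 dV2 : V →ₗ[K] V) (dW1 dW2 : W →ₗ[K] W)
    (hdV1sq : dV1 ∘ₗ dV1 = 0) (hdV2sq : dV2 ∘ₗ dV2 = 0)
    (hVanti : dV1 ∘ₗ dV2 + dV2 ∘ₗ dV1 = 0)
    (hdW1sq : dW1 ∘ₗ dW1 = 0) (hdW2sq : dW2 ∘ₗ dW2 = 0)
    (hWanti : dW1 ∘ₗ dW2 + dW2 ∘ₗ dW1 = 0)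
    (f : V →ₗ[K] W) (hf : Function.Injective f)
    (hf1 : f ∘ₗ dV1 = dW1 ∘ₗ f) (hf2 : f ∘ₗ dV2 = dW2 ∘ₗ f) :
    -- (a) well-definedness of the connecting map
    (∀ w : W, dW1 (dW2 w) ∈ range f →
      ∃ v : V, f v = dW1 (dW2 w) ∧ dV1 v = 0 ∧ dV2 v = 0) ∧
    -- (b) independence of the choice of representative / lift
    (∀ w w' : W, dW1 (dW2 w) ∈ range f → dW1 (dW2 w') ∈ range f →
      w - w' ∈ range f ⊔ range dW1 ⊔ range dW2 →
      ∀ v v' : V, f v = dW1 (dW2 w) → f v' = dW1 (dW2 w') →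
        v - v' ∈ range (dV1 ∘ₗ dV2)) ∧
    -- (c) exactness at H_A(Q)
    (∀ w : W, dW1 (dW2 w) ∈ range f →
      ((∃ u : V, dW1 (dW2 w) = f (dV1 (dV2 u))) ↔
        (∃ w' : W, dW1 (dW2 w') = 0 ∧
          w - w' ∈ range f ⊔ range dW1 ⊔ range dW2))) ∧
    -- (d) exactness at H_BC(V)
    (∀ v : V, dV1 v = 0 → dV2 v = 0 →
      ((f v ∈ range (dW1 ∘ₗ dW2)) ↔
        (∃ (w : W) (u : V), dW1 (dW2 w) ∈ range f ∧
          f (v - dV1 (dV2 u)) = dW1 (dW2 w)))) := by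
  have hc12 : ∀ a : V, f (dV1 (dV2 a)) = dW1 (dW2 (f a)) := by
    intro a
    have h1 := congrFun (congrArg DFunLike.coe hf1) (dV2 a)
    have h2 := congrFun (congrArg DFunLike.coe hf2) a
    simp only [LinearMap.coe_comp, Function.comp_apply] at h1 h2
    rw [h1, h2]
  have hW1sq : ∀ x : W, dW1 (dW1 x) = 0 := by
    intro x
    have := congrFun (congrArg DFunLike.coe hdW1sq) x
    simpa using this
  have hW2sq : ∀ x : W, dW2 (dW2 x) = 0 := by
    intro x
    have := congrFun (congrArg DFunLike.coe hdW2sq) x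
    simpa using this
  have hWa : ∀ x : W, dW1 (dW2 x) = - dW2 (dW1 x) := by
    intro x
    have := congrFun (congrArg DFunLike.coe hWanti) x
    simp only [LinearMap.add_apply, LinearMap.coe_comp, Function.comp_apply,
      LinearMap.zero_apply] at this
    exact eq_neg_of_add_eq_zero_left this
  -- key: dW1 dW2 kills range dW1 and range dW2
  have hkill : ∀ x : W, dW1 (dW2 (dW1 x)) = 0 ∧ dW1 (dW2 (dW2 x)) = 0 := by
    intro x
    constructor
    · rw [hWa (dW1 x), hW1sq, map_zero, neg_zero]
    · rw [hW2sq, map_zero]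
  have hddf : ∀ (x : W), x ∈ range f ⊔ range dW1 ⊔ range dW2 →
      ∃ a : V, dW1 (dW2 x) = f (dV1 (dV2 a)) := by
    intro x hx
    rcases Submodule.mem_sup.mp hx with ⟨y, hy, z, hz, rfl⟩
    rcases Submodule.mem_sup.mp hy with ⟨p, hp, q, hq, rfl⟩
    rcases hp with ⟨a, rfl⟩
    rcases hq with ⟨b, rfl⟩
    rcases hz with ⟨c, rfl⟩
    refine ⟨a, ?_⟩
    rw [hc12 a]
    simp only [map_add]
    rw [(hkill b).1, (hkill c).2, add_zero, add_zero]
  refine ⟨?_, ?_, ?_, ?_⟩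
  · -- (a)
    rintro w ⟨v, hv⟩
    refine ⟨v, hv, ?_, ?_⟩
    · apply hf
      have h1 := congrFun (congrArg DFunLike.coe hf1) v
      simp only [LinearMap.coe_comp, Function.comp_apply] at h1
      rw [h1, hv, hW1sq, map_zero]
    · apply hf
      have h2 := congrFun (congrArg DFunLike.coe hf2) v
      simp only [LinearMap.coe_comp, Function.comp_apply] at h2
      rw [h2, hv, hWa, map_neg, hW2sq, neg_zero, map_zero]
  · -- (b)
    intro w w' _ _ hmem v v' hv hv'
    rcases hddf (w - w') hmem with ⟨a, ha⟩
    have : f (v - v') = f (dV1 (dV2 a)) := by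
      rw [map_sub, hv, hv', ← ha, map_sub, map_sub]
    have h := hf this
    exact ⟨a, by simpa using h.symm⟩
  · -- (c)
    intro w hw
    constructor
    · rintro ⟨u, hu⟩
      refine ⟨w - f u, ?_, ?_⟩
      · rw [map_sub, map_sub, hu, ← hc12 u, sub_self]
      · rw [sub_sub_cancel]
        exact Submodule.mem_sup_left (Submodule.mem_sup_left ⟨u, rfl⟩)
    · rintro ⟨w', hw', hmem⟩
      rcases hddf (w - w') hmem with ⟨a, ha⟩
      refine ⟨a, ?_⟩
      have : dW1 (dW2 w) = dW1 (dW2 (w - w')) := by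
        rw [map_sub, map_sub, hw', sub_zero]
      rw [this, ha]
  · -- (d)
    intro v hv1 hv2
    constructor
    · rintro ⟨w, hw⟩
      simp only [LinearMap.coe_comp, Function.comp_apply] at hw
      exact ⟨w, 0, ⟨v, hw.symm⟩, by simp [hw]⟩
    · rintro ⟨w, u, _, hfu⟩
      refine ⟨w + f u, ?_⟩
      simp only [LinearMap.coe_comp, Function.comp_apply, map_add]
      rw [← hc12 u]
      rw [map_sub] at hfu
      exact (sub_eq_iff_eq_add.mp hfu).symm
end

section
/- Let A ⊗ ⋀V be a linear Hirsch extension of a cbba A by a bicomplex V with structure data (φ, φ̄, Θ, Θ̄), where on generators x ∈ V one has ∂x = ∂_V x + φ(x) + Θ(x) and ∂̄x = ∂̄_V x + φ̄(x) + Θ̄(x). Let σ be the algebra automorphism of A ⊗ ⋀V fixing A and sending x ↦ x + H(x) for a degree-0 linear map H : V → A. Then the conjugated differential σ⁻¹∂σ equals ∂_V + (φ + ∂_Θ H) + Θ on V, i.e. conjugation by σ changes φ to φ + ∂_Θ H and leaves Θ unchanged, where ∂_Θ H = ∂_A∘H − H∘∂_V − (1⊗H)∘Θ (with Koszul signs).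 -/
open LinearMap TensorProduct

/-- Let `E = A ⊗ ⋀V` be a linear Hirsch extension of a cbba `A`
by a bicomplex `V`, with structure data `(φ, Θ)` for `∂`: on generators
`∂(x) = ∂_V x + φ(x) + Θ(x)` (the `A ⊗ V`-valued term being multiplied into `E`
via `m`).  Let `σ` be the relative algebra automorphism fixing `A` with
`σ(x) = x + H(x)` for a degree-0 linear `H : V → A`, and `τ = σ⁻¹`
(`τ(x) = x − H(x)`).  Then the conjugated differential satisfies, on generators,
`σ⁻¹∂σ = ∂_V + (φ + ∂_Θ H) + Θ`, where
`∂_Θ H = ∂_A∘H − H∘∂_V − μ∘(1⊗H)∘Θ` (no Koszul sign since `H` is even). -/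
theorem statement11
    {K A E V : Type*} [Field K] [CharZero K]
    [Ring A] [Algebra K A] [Ring E] [Algebra K E]
    [AddCommGroup V] [Module K V]
    (ι : A →ₐ[K] E) (jV : V →ₗ[K] E)
    (dA : A →ₗ[K] A) (dV : V →ₗ[K] V)
    (φ H : V →ₗ[K] A) (Θ : V →ₗ[K] A ⊗[K] V)
    -- multiplication `A ⊗ V → E`, `a ⊗ v ↦ ι(a)·jV(v)`
    (m : A ⊗[K] V →ₗ[K] E)
    (hm : m = LinearMap.mul' K E ∘ₗ TensorProduct.map ι.toLinearMap jV)
    -- the differential ∂ of the Hirsch extension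
    (D : E →ₗ[K] E)
    (hDA : ∀ a : A, D (ι a) = ι (dA a))
    (hDV : ∀ x : V, D (jV x) = jV (dV x) + ι (φ x) + m (Θ x))
    -- the relative automorphism σ and its inverse τ
    (σ τ : E →ₐ[K] E)
    (hτσ : ∀ e : E, τ (σ e) = e) (hστ : ∀ e : E, σ (τ e) = e)
    (hσA : ∀ a : A, σ (ι a) = ι a) (hτA : ∀ a : A, τ (ι a) = ι a)
    (hσV : ∀ x : V, σ (jV x) = jV x + ι (H x))
    (hτV : ∀ x : V, τ (jV x) = jV x - ι (H x)) :
    ∀ x : V, τ (D (σ (jV x))) =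
      jV (dV x)
      + ι ((φ + (dA ∘ₗ H - H ∘ₗ dV
          - LinearMap.mul' K A ∘ₗ TensorProduct.map LinearMap.id H ∘ₗ Θ)) x)
      + m (Θ x) := by
  have hτm : ∀ t : A ⊗[K] V,
      τ (m t) = m t - ι (LinearMap.mul' K A ((TensorProduct.map LinearMap.id H) t)) := by
    intro t
    induction t using TensorProduct.induction_on with
    | zero => simp
    | tmul a v =>
        have : m (a ⊗ₜ[K] v) = ι a * jV v := by
          simp [hm, LinearMap.mul'_apply]
        rw [this, map_mul, hτA, hτV, mul_sub]
        simp [LinearMap.mul'_apply, map_mul, this]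
    | add s t hs ht =>
        simp only [map_add, hs, ht]
        abel
  intro x
  rw [hσV, map_add, hDV, hDA, map_add, map_add, map_add, hτV, hτA, hτA, hτm]
  simp only [LinearMap.add_apply, LinearMap.sub_apply, LinearMap.comp_apply,
    map_add, map_sub, LinearMap.id_coe, id_eq]
  abel
end

section
/- Let A ⊗ ⋀V be a linear Hirsch extension of a cbba A by a bicomplex V, with k-invariant data (φ, φ̄, Θ, Θ̄). If f : A → C is a cbba map and the extension condition holds — namely there exists a degree-0 linear map H : V → C with f∘φ = ∂_{fΘ}H and f∘φ̄ = ∂̄_{fΘ̄}H — then f extends to a cbba map f̃ : A ⊗ ⋀V → C with f̃|_V = H; conversely any extension of f arises this way. -/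
open LinearMap TensorProduct

/-- Let `E = A ⊗ ⋀V` be a linear Hirsch extension of a cbba `A`
by a bicomplex `V` with k-invariant data `(φ, φ̄, Θ, Θ̄)` (on generators
`∂x = ∂_V x + φ(x) + Θ(x)`, `∂̄x = ∂̄_V x + φ̄(x) + Θ̄(x)`), and let `f : A → C` be
a cbba map.  Then for any degree-0 linear `H : V → C`: the twisted equations
`f∘φ = ∂_{fΘ}H` and `f∘φ̄ = ∂̄_{fΘ̄}H` hold iff `f` extends to a cbba map
`f̃ : E → C` with `f̃|_V = H`.  (Freeness of the extension is encoded by the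
universal property `hfree`, and the fact that commutation of an algebra map with a
derivation may be checked on the generators `A` and `V` by `hgen1`, `hgen2`.) -/
theorem statement12
    {K A E C V : Type*} [Field K] [CharZero K]
    [Ring A] [Algebra K A] [Ring E] [Algebra K E] [Ring C] [Algebra K C]
    [AddCommGroup V] [Module K V]
    (ι : A →ₐ[K] E) (jV : V →ₗ[K] E)
    (dA1 dA2 : A →ₗ[K] A) (dV1 dV2 : V →ₗ[K] V)
    (φ φb : V →ₗ[K] A) (Θ Θb : V →ₗ[K] A ⊗[K] V)
    (m : A ⊗[K] V →ₗ[K] E)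
    (hm : m = LinearMap.mul' K E ∘ₗ TensorProduct.map ι.toLinearMap jV)
    (DE1 DE2 : E →ₗ[K] E)
    (hDE1A : ∀ a : A, DE1 (ι a) = ι (dA1 a))
    (hDE2A : ∀ a : A, DE2 (ι a) = ι (dA2 a))
    (hDE1V : ∀ x : V, DE1 (jV x) = jV (dV1 x) + ι (φ x) + m (Θ x))
    (hDE2V : ∀ x : V, DE2 (jV x) = jV (dV2 x) + ι (φb x) + m (Θb x))
    (DC1 DC2 : C →ₗ[K] C)
    (f : A →ₐ[K] C)
    (hf1 : ∀ a : A, f (dA1 a) = DC1 (f a))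
    (hf2 : ∀ a : A, f (dA2 a) = DC2 (f a))
    -- universal property of the free extension `E = A ⊗ ⋀V`
    (hfree : ∀ H : V →ₗ[K] C, ∃ F : E →ₐ[K] C,
      F.comp ι = f ∧ ∀ x : V, F (jV x) = H x)
    -- commutation with the (derivation) differentials may be checked on generators
    (hgen1 : ∀ F : E →ₐ[K] C, F.comp ι = f →
      (∀ a : A, F (DE1 (ι a)) = DC1 (F (ι a))) →
      (∀ x : V, F (DE1 (jV x)) = DC1 (F (jV x))) →
      ∀ e : E, F (DE1 e) = DC1 (F e))
    (hgen2 : ∀ F : E →ₐ[K] C, F.comp ι = f →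
      (∀ a : A, F (DE2 (ι a)) = DC2 (F (ι a))) →
      (∀ x : V, F (DE2 (jV x)) = DC2 (F (jV x))) →
      ∀ e : E, F (DE2 e) = DC2 (F e)) :
    ∀ H : V →ₗ[K] C,
      ((f.toLinearMap ∘ₗ φ =
          DC1 ∘ₗ H - H ∘ₗ dV1
          - LinearMap.mul' K C ∘ₗ TensorProduct.map LinearMap.id H
              ∘ₗ TensorProduct.map f.toLinearMap LinearMap.id ∘ₗ Θ) ∧
        (f.toLinearMap ∘ₗ φb =
          DC2 ∘ₗ H - H ∘ₗ dV2
          - LinearMap.mul' K C ∘ₗ TensorProduct.map LinearMap.id H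
              ∘ₗ TensorProduct.map f.toLinearMap LinearMap.id ∘ₗ Θb))
      ↔ (∃ F : E →ₐ[K] C, F.comp ι = f ∧ (∀ x : V, F (jV x) = H x) ∧
          (∀ e : E, F (DE1 e) = DC1 (F e)) ∧ (∀ e : E, F (DE2 e) = DC2 (F e))) := by

  intro H
  -- key computation: F (m t) = mul' (map id H (map f id t)) for any extension F
  have key : ∀ (F : E →ₐ[K] C), F.comp ι = f → (∀ x : V, F (jV x) = H x) →
      ∀ t : A ⊗[K] V, F (m t) =
        (LinearMap.mul' K C ∘ₗ TensorProduct.map LinearMap.id H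
          ∘ₗ TensorProduct.map f.toLinearMap LinearMap.id) t := by
    intro F hFι hFj t
    have hFa : ∀ a : A, F (ι a) = f a := fun a => congrArg (fun g => g a) hFι
    induction t using TensorProduct.induction_on with
    | zero => simp
    | tmul a x =>
        simp [hm, LinearMap.mul'_apply, map_mul, hFa, hFj]
    | add s t hs ht => simp [map_add, hs, ht]
  constructor
  · rintro ⟨h1, h2⟩
    obtain ⟨F, hFι, hFj⟩ := hfree H
    have hFa : ∀ a : A, F (ι a) = f a := fun a => congrArg (fun g => g a) hFι
    have genA1 : ∀ a : A, F (DE1 (ι a)) = DC1 (F (ι a)) := by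
      intro a; rw [hDE1A, hFa, hFa, hf1]
    have genA2 : ∀ a : A, F (DE2 (ι a)) = DC2 (F (ι a)) := by
      intro a; rw [hDE2A, hFa, hFa, hf2]
    have genV1 : ∀ x : V, F (DE1 (jV x)) = DC1 (F (jV x)) := by
      intro x
      have e1 := congrArg (fun g => g x) h1
      simp only [LinearMap.comp_apply, LinearMap.sub_apply, AlgHom.toLinearMap_apply] at e1
      rw [hDE1V, map_add, map_add, hFa, hFj, hFj, key F hFι hFj, e1]
      simp only [LinearMap.comp_apply]; abel
    have genV2 : ∀ x : V, F (DE2 (jV x)) = DC2 (F (jV x)) := by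
      intro x
      have e2 := congrArg (fun g => g x) h2
      simp only [LinearMap.comp_apply, LinearMap.sub_apply, AlgHom.toLinearMap_apply] at e2
      rw [hDE2V, map_add, map_add, hFa, hFj, hFj, key F hFι hFj, e2]
      simp only [LinearMap.comp_apply]; abel
    exact ⟨F, hFι, hFj, hgen1 F hFι genA1 genV1, hgen2 F hFι genA2 genV2⟩
  · rintro ⟨F, hFι, hFj, hc1, hc2⟩
    have hFa : ∀ a : A, F (ι a) = f a := fun a => congrArg (fun g => g a) hFι
    constructor
    · ext x
      have := hc1 (jV x)
      rw [hDE1V, map_add, map_add, hFa, hFj, hFj, key F hFι hFj] at this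
      simp only [LinearMap.comp_apply, LinearMap.sub_apply, AlgHom.toLinearMap_apply]
      rw [← this]; simp only [LinearMap.comp_apply]; abel
    · ext x
      have := hc2 (jV x)
      rw [hDE2V, map_add, map_add, hFa, hFj, hFj, key F hFι hFj] at this
      simp only [LinearMap.comp_apply, LinearMap.sub_apply, AlgHom.toLinearMap_apply]
      rw [← this]; simp only [LinearMap.comp_apply]; abel
end
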